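/- Let (G,H) be a compact Friedrichs module and (E,K) a Friedrichs module, with Gelfand triplets G ⊂ H ⊂ G* and E ⊂ K ⊂ E*. Let D ∈ B(G,E), let a, b ∈ B(E,E*), and let z ∈ ℂ be such that: (1) D*aD − z and D*bD − z are bijective maps from G onto G*; (2) a − b ∈ B₀₀ˡ(E,E*); (3) the bounded operator D∘(Δ_{a*} − z̄)⁻¹ : H → K is right decay preserving, where Δ_a, Δ_b, Δ_{a*} denote the operators induced in H by D*aD, D*bD, D*a*D respectively. Then (Δ_a − z)⁻¹ − (Δ_b − z)⁻¹ is a compact operator on H, i.e. Δ_b is a compact perturbation of Δ_a. -/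

import Mathlib

open ContinuousLinearMap

noncomputable section

/-- The space of continuous antilinear forms on `G` (the "adjoint space" `G*`). -/
abbrev AntiDual (G : Type*) [NormedAddCommGroup G] [NormedSpace ℂ G] : Type _ :=
  G →SL[starRingEnd ℂ] ℂ

/-- Given a continuous embedding `e : G → H` of a normed space into a Hilbert space,
the canonical map `H → G*`, `v ↦ (u ↦ ⟪e u, v⟫)`. -/
def toAntiDual {G H : Type*} [NormedAddCommGroup G] [NormedSpace ℂ G]
    [NormedAddCommGroup H] [InnerProductSpace ℂ H] (e : G →L[ℂ] H) :
    H →L[ℂ] AntiDual G :=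
  LinearMap.mkContinuous
    { toFun := fun v => ((innerSL ℂ).flip v).comp e
      map_add' := fun v w => by ext u; simp
      map_smul' := fun c v => by ext u; simp }
    ‖e‖ (fun v => by
      have hv : ‖(innerSL ℂ).flip v‖ ≤ ‖v‖ :=
        opNorm_le_bound _ (norm_nonneg v)
          (fun u => by simpa [mul_comm] using norm_inner_le_norm (𝕜 := ℂ) u v)
      calc ‖((innerSL ℂ).flip v).comp e‖ ≤ ‖(innerSL ℂ).flip v‖ * ‖e‖ := opNorm_comp_le _ _
      _ ≤ ‖v‖ * ‖e‖ := by gcongr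
      _ = ‖e‖ * ‖v‖ := mul_comm _ _)

/-- Precomposition with `D : G →L E`, as a map `E* →L G*`; this is the adjoint `D*`. -/
def precompAntiDual {G E : Type*} [NormedAddCommGroup G] [NormedSpace ℂ G]
    [NormedAddCommGroup E] [NormedSpace ℂ E] (D : G →L[ℂ] E) :
    AntiDual E →L[ℂ] AntiDual G :=
  LinearMap.mkContinuous
    { toFun := fun w => w.comp D
      map_add' := fun w₁ w₂ => by ext u; simp
      map_smul' := fun c w => by ext u; simp }
    ‖D‖ (fun w => by
      calc ‖w.comp D‖ ≤ ‖w‖ * ‖D‖ := opNorm_comp_le _ _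
      _ = ‖D‖ * ‖w‖ := mul_comm _ _)

/-- Auxiliary: the antilinear form `u ↦ conj ⟨v, a u⟩`. -/
def adjointFormAux {E : Type*} [NormedAddCommGroup E] [NormedSpace ℂ E]
    (a : E →L[ℂ] AntiDual E) (v : E) : AntiDual E :=
  LinearMap.mkContinuous
    { toFun := fun u => starRingEnd ℂ (a u v)
      map_add' := fun u₁ u₂ => by simp
      map_smul' := fun c u => by simp }
    (‖a‖ * ‖v‖) (fun u => by
      simp only [LinearMap.coe_mk, AddHom.coe_mk]
      calc ‖starRingEnd ℂ (a u v)‖ = ‖a u v‖ := by simp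
      _ ≤ ‖a u‖ * ‖v‖ := (a u).le_opNorm v
      _ ≤ (‖a‖ * ‖u‖) * ‖v‖ := by gcongr; exact a.le_opNorm u
      _ = ‖a‖ * ‖v‖ * ‖u‖ := by ring)

theorem adjointFormAux_norm_le {E : Type*} [NormedAddCommGroup E] [NormedSpace ℂ E]
    (a : E →L[ℂ] AntiDual E) (v : E) : ‖adjointFormAux a v‖ ≤ ‖a‖ * ‖v‖ :=
  LinearMap.mkContinuous_norm_le _ (mul_nonneg (norm_nonneg a) (norm_nonneg v)) _

@[simp] theorem adjointFormAux_apply {E : Type*} [NormedAddCommGroup E] [NormedSpace ℂ E]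
    (a : E →L[ℂ] AntiDual E) (v u : E) :
    adjointFormAux a v u = starRingEnd ℂ (a u v) := rfl

/-- The adjoint form `a* ∈ B(E,E*)` of `a ∈ B(E,E*)`: `⟨u, a* v⟩ = conj ⟨v, a u⟩`. -/
def adjointForm {E : Type*} [NormedAddCommGroup E] [NormedSpace ℂ E]
    (a : E →L[ℂ] AntiDual E) : E →L[ℂ] AntiDual E :=
  LinearMap.mkContinuous
    { toFun := fun v => adjointFormAux a v
      map_add' := fun v w => by ext u; simp
      map_smul' := fun c v => by ext u; simp }
    ‖a‖ (fun v => adjointFormAux_norm_le a v)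


variable {H K : Type*}

/-- `M` is the multiplier algebra of a Banach module structure on `H`: a non-degenerate
norm-closed subalgebra of `B(H)` possessing a bounded approximate unit. -/
structure IsBanachModule (H : Type*) [NormedAddCommGroup H] [NormedSpace ℂ H]
    (M : Set (H →L[ℂ] H)) : Prop where
  zero_mem : (0 : H →L[ℂ] H) ∈ M
  add_mem : ∀ {A B : H →L[ℂ] H}, A ∈ M → B ∈ M → A + B ∈ M
  smul_mem : ∀ (c : ℂ) {A : H →L[ℂ] H}, A ∈ M → c • A ∈ M
  mul_mem : ∀ {A B : H →L[ℂ] H}, A ∈ M → B ∈ M → A.comp B ∈ M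
  isClosed : IsClosed M
  nondegenerate : Dense (↑(Submodule.span ℂ {u : H | ∃ A ∈ M, ∃ v : H, u = A v}) : Set H)
  approx_unit : ∃ C : ℝ, ∀ ε > (0 : ℝ), ∀ F : Finset (H →L[ℂ] H), ↑F ⊆ M →
    ∃ J ∈ M, ‖J‖ ≤ C ∧ ∀ A ∈ F, ‖J.comp A - A‖ ≤ ε ∧ ‖A.comp J - A‖ ≤ ε

/-- A Hilbert module: a Banach module on a Hilbert space whose multiplier algebra is a
C*-algebra of operators (i.e. is moreover closed under adjoints). -/
structure IsHilbertModule (H : Type*) [NormedAddCommGroup H] [InnerProductSpace ℂ H]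
    [CompleteSpace H] (M : Set (H →L[ℂ] H)) extends IsBanachModule H M : Prop where
  star_mem : ∀ {A : H →L[ℂ] H}, A ∈ M → ContinuousLinearMap.adjoint A ∈ M

/-- `B₀ˡ(H,K)`: the closed linear span of the operators `A ∘ T` with `A` in the multiplier
algebra of `K` and `T ∈ B(H,K)` (operators left vanishing at infinity). -/
def B0l [NormedAddCommGroup H] [NormedSpace ℂ H] [NormedAddCommGroup K] [NormedSpace ℂ K]
    (MK : Set (K →L[ℂ] K)) : Set (H →L[ℂ] K) :=
  closure (↑(Submodule.span ℂ
    {S : H →L[ℂ] K | ∃ A ∈ MK, ∃ T : H →L[ℂ] K, S = A.comp T}) : Set (H →L[ℂ] K))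

/-- `B₀ʳ(H,K)`: the closed linear span of the operators `T ∘ A` with `A` in the multiplier
algebra of `H` and `T ∈ B(H,K)` (operators right vanishing at infinity). -/
def B0r [NormedAddCommGroup H] [NormedSpace ℂ H] [NormedAddCommGroup K] [NormedSpace ℂ K]
    (MH : Set (H →L[ℂ] H)) : Set (H →L[ℂ] K) :=
  closure (↑(Submodule.span ℂ
    {S : H →L[ℂ] K | ∃ A ∈ MH, ∃ T : H →L[ℂ] K, S = T.comp A}) : Set (H →L[ℂ] K))

/-- `S ∈ B(H,K)` is left decay preserving. -/
def LeftDecayPreserving [NormedAddCommGroup H] [NormedSpace ℂ H] [NormedAddCommGroup K]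
    [NormedSpace ℂ K] (MH : Set (H →L[ℂ] H)) (MK : Set (K →L[ℂ] K))
    (S : H →L[ℂ] K) : Prop :=
  ∀ A ∈ MH, S.comp A ∈ B0l MK

/-- `S ∈ B(H,K)` is right decay preserving. -/
def RightDecayPreserving [NormedAddCommGroup H] [NormedSpace ℂ H] [NormedAddCommGroup K]
    [NormedSpace ℂ K] (MH : Set (H →L[ℂ] H)) (MK : Set (K →L[ℂ] K))
    (S : H →L[ℂ] K) : Prop :=
  ∀ A ∈ MK, A.comp S ∈ B0r MH

/-!
Write `Sₐ = D*aD − z` and `S_b = D*bD − z` as isomorphisms `G ≃ G*`, and let `ι : H → G*`,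
`ι_E : K → E*` be the Riesz maps. The second resolvent identity gives
`(Δₐ − z)⁻¹ − (Δ_b − z)⁻¹ = −e Sₐ⁻¹ D* (a − b) D S_b⁻¹ ι`, and `e Sₐ⁻¹ D* ι_E` is the adjoint
of `W = D (Δ_{a*} − z̄)⁻¹`. As `W` is right decay preserving, its adjoint is left decay
preserving, so approximating `a − b` by forms `ι_E T e_E` with `T ∈ B₀ˡ(K)` puts the difference
of resolvents in `B₀ˡ(H)`. That difference factors through `e : G → H`, so its product with
every multiplier is compact; and an operator in `B₀ˡ(H)` is the norm limit of its products
with a bounded approximate unit.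
-/
@[simp] theorem toAntiDual_apply {G H : Type*} [NormedAddCommGroup G] [NormedSpace ℂ G]
    [NormedAddCommGroup H] [InnerProductSpace ℂ H] (e : G →L[ℂ] H) (v : H) (u : G) :
    toAntiDual e v u = inner ℂ (e u) v := rfl

@[simp] theorem precompAntiDual_apply {G E : Type*} [NormedAddCommGroup G] [NormedSpace ℂ G]
    [NormedAddCommGroup E] [NormedSpace ℂ E] (D : G →L[ℂ] E) (w : AntiDual E) (u : G) :
    precompAntiDual D w u = w (D u) := rfl

@[simp] theorem adjointForm_apply {E : Type*} [NormedAddCommGroup E] [NormedSpace ℂ E]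
    (a : E →L[ℂ] AntiDual E) (v u : E) :
    adjointForm a v u = starRingEnd ℂ (a u v) := rfl

theorem map_mem_closure_span {R R₂ X Y F : Type*} [Semiring R] [Semiring R₂] {σ : R →+* R₂}
    [TopologicalSpace X] [AddCommMonoid X] [Module R X]
    [TopologicalSpace Y] [AddCommMonoid Y] [Module R₂ Y] [ContinuousAdd Y]
    [ContinuousConstSMul R₂ Y] [FunLike F X Y] [SemilinearMapClass F σ X Y]
    [ContinuousMapClass F X Y] (f : F) {s : Set X} {t : Set Y} {x : X}
    (hx : x ∈ closure (Submodule.span R s : Set X))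
    (hst : ∀ x ∈ s, f x ∈ closure (Submodule.span R₂ t : Set Y)) :
    f x ∈ closure (Submodule.span R₂ t : Set Y) := by
  have hspan : Submodule.span R s ≤
      (Submodule.span R₂ t).topologicalClosure.comap (f : X →ₛₗ[σ] Y) :=
    Submodule.span_le.2 fun y hy => by
      change f y ∈ ((Submodule.span R₂ t).topologicalClosure : Set Y)
      rw [Submodule.topologicalClosure_coe]
      exact hst y hy
  rw [← closure_closure (s := (Submodule.span R₂ t : Set Y))]
  refine map_mem_closure (map_continuous f) hx fun y hy => ?_
  rw [← Submodule.topologicalClosure_coe]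
  exact hspan hy

section DecayingOperators

variable {X Y Z U : Type*} [NormedAddCommGroup X] [NormedSpace ℂ X]
  [NormedAddCommGroup Y] [NormedSpace ℂ Y] [NormedAddCommGroup Z] [NormedSpace ℂ Z]
  [NormedAddCommGroup U] [NormedSpace ℂ U]

def compLeftRight (L : Y →L[ℂ] Z) (R : X →L[ℂ] U) : (U →L[ℂ] Y) →L[ℂ] X →L[ℂ] Z :=
  (compL ℂ X Y Z L).comp ((compL ℂ X U Y).flip R)

@[simp] theorem compLeftRight_apply (L : Y →L[ℂ] Z) (R : X →L[ℂ] U) (T : U →L[ℂ] Y) :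
    compLeftRight L R T = L.comp (T.comp R) := rfl

theorem comp_mem_B0l {M : Set (Y →L[ℂ] Y)} {S : U →L[ℂ] Y} (hS : S ∈ B0l M) (R : X →L[ℂ] U) :
    S.comp R ∈ B0l M :=
  map_mem_closure_span ((compL ℂ X U Y).flip R) hS
    (fun _ ⟨A, hA, T, hT⟩ => subset_closure <| Submodule.subset_span
      ⟨A, hA, T.comp R, by simp [hT, comp_assoc]⟩)

theorem LeftDecayPreserving.compLeftRight_mem_B0l {MY : Set (Y →L[ℂ] Y)}
    {MZ : Set (Z →L[ℂ] Z)} {L : Y →L[ℂ] Z} (hL : LeftDecayPreserving MY MZ L)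
    {T : U →L[ℂ] Y} (hT : T ∈ B0l MY) (R : X →L[ℂ] U) :
    compLeftRight L R T ∈ B0l MZ :=
  map_mem_closure_span (compLeftRight L R) hT
    (fun _ ⟨A, hA, T', hT'⟩ => by
      rw [hT', compLeftRight_apply, comp_assoc, ← comp_assoc]
      exact comp_mem_B0l (hL A hA) _)

end DecayingOperators

section Adjoints

variable [NormedAddCommGroup H] [InnerProductSpace ℂ H] [CompleteSpace H]
  [NormedAddCommGroup K] [InnerProductSpace ℂ K] [CompleteSpace K]

theorem adjoint_mem_B0l_of_mem_B0r {M : Set (H →L[ℂ] H)}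
    (hM : ∀ {A : H →L[ℂ] H}, A ∈ M → adjoint A ∈ M) {S : H →L[ℂ] K} (hS : S ∈ B0r M) :
    adjoint S ∈ B0l M :=
  map_mem_closure_span (adjoint : (H →L[ℂ] K) ≃ₗᵢ⋆[ℂ] K →L[ℂ] H) hS
    (fun _ ⟨A, hA, T, hT⟩ => subset_closure <| Submodule.subset_span
      ⟨adjoint A, hM hA, adjoint T, by rw [hT, adjoint_comp]⟩)

theorem RightDecayPreserving.leftDecayPreserving_adjoint {MH : Set (H →L[ℂ] H)}
    {MK : Set (K →L[ℂ] K)} (hMH : ∀ {A : H →L[ℂ] H}, A ∈ MH → adjoint A ∈ MH)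
    (hMK : ∀ {A : K →L[ℂ] K}, A ∈ MK → adjoint A ∈ MK) {W : H →L[ℂ] K}
    (hW : RightDecayPreserving MH MK W) : LeftDecayPreserving MK MH (adjoint W) := by
  intro A hA
  simpa only [adjoint_comp, adjoint_adjoint] using adjoint_mem_B0l_of_mem_B0r hMH (hW _ (hMK hA))

end Adjoints

namespace IsBanachModule

variable {X : Type*} [NormedAddCommGroup X] [NormedSpace ℂ X]
  [NormedAddCommGroup H] [NormedSpace ℂ H] {M : Set (H →L[ℂ] H)}

theorem exists_bound_comp_sub_le_of_mem_span (hM : IsBanachModule H M) :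
    ∃ C : ℝ, ∀ P ∈ Submodule.span ℂ {S : X →L[ℂ] H | ∃ A ∈ M, ∃ T : X →L[ℂ] H, S = A.comp T},
      ∀ ε > 0, ∃ J ∈ M, ‖J‖ ≤ C ∧ ‖J.comp P - P‖ ≤ ε := by
  classical
  obtain ⟨C, hC⟩ := hM.approx_unit
  refine ⟨C, fun P hP ε hε => ?_⟩
  obtain ⟨n, c, S, rfl⟩ := Submodule.mem_span_set'.1 hP
  choose A hA T hT using fun i => (S i).2
  set B := ∑ i, ‖c i‖ * ‖T i‖
  obtain ⟨J, hJ, hJC, hJA⟩ := hC (ε / (B + 1)) (by positivity) (Finset.univ.image A)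
    (by simpa [Set.range_subset_iff] using hA)
  refine ⟨J, hJ, hJC, ?_⟩
  calc ‖J.comp (∑ i, c i • (S i : X →L[ℂ] H)) - ∑ i, c i • (S i : X →L[ℂ] H)‖
      = ‖∑ i, c i • (J.comp (A i) - A i).comp (T i)‖ := by
        simp only [hT, comp_finsetSum, comp_smul, ← Finset.sum_sub_distrib, ← smul_sub,
          sub_comp, comp_assoc]
    _ ≤ ∑ i, ‖c i‖ * (ε / (B + 1) * ‖T i‖) := by
        refine norm_sum_le_of_le _ fun i _ => ?_
        rw [norm_smul]
        gcongr
        exact (opNorm_comp_le _ _).trans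
          (by gcongr; exact (hJA _ (Finset.mem_image_of_mem _ (Finset.mem_univ i))).1)
    _ = ε / (B + 1) * B := by
        simp only [B, Finset.mul_sum]
        exact Finset.sum_congr rfl fun i _ => by ring
    _ ≤ ε := by
        rw [div_mul_eq_mul_div, div_le_iff₀ (by positivity)]
        nlinarith

theorem mem_closure_image_comp_of_mem_B0l (hM : IsBanachModule H M) {S : X →L[ℂ] H}
    (hS : S ∈ B0l M) : S ∈ closure ((fun J : H →L[ℂ] H => J.comp S) '' M) := by
  obtain ⟨C, hC⟩ := hM.exists_bound_comp_sub_le_of_mem_span (X := X)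
  have hC0 : 0 ≤ C := by
    obtain ⟨J, -, hJC, -⟩ := hC 0 (Submodule.zero_mem _) 1 one_pos
    exact (norm_nonneg J).trans hJC
  refine Metric.mem_closure_iff.2 fun ε hε => ?_
  obtain ⟨P, hP, hSP⟩ := Metric.mem_closure_iff.1 hS (ε / (2 * (C + 1))) (by positivity)
  obtain ⟨J, hJ, hJC, hJP⟩ := hC P hP (ε / 2) (by positivity)
  refine ⟨J.comp S, ⟨J, hJ, rfl⟩, ?_⟩
  rw [dist_eq_norm] at hSP ⊢
  have hSP' : (C + 1) * ‖S - P‖ < ε / 2 :=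
    calc (C + 1) * ‖S - P‖ < (C + 1) * (ε / (2 * (C + 1))) := by gcongr
      _ = ε / 2 := by field_simp
  calc ‖S - J.comp S‖ = ‖(S - P) - J.comp (S - P) - (J.comp P - P)‖ := by
        rw [comp_sub]; abel_nf
    _ ≤ ‖S - P‖ + ‖J.comp (S - P)‖ + ‖J.comp P - P‖ :=
        (norm_sub_le _ _).trans (by gcongr; exact norm_sub_le _ _)
    _ ≤ ‖S - P‖ + ‖J‖ * ‖S - P‖ + ‖J.comp P - P‖ := by
        gcongr; exact opNorm_comp_le _ _
    _ ≤ (C + 1) * ‖S - P‖ + ε / 2 := by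
        nlinarith [mul_le_mul_of_nonneg_right hJC (norm_nonneg (S - P))]
    _ < ε := by linarith

theorem isCompactOperator_of_mem_B0l [CompleteSpace H] (hM : IsBanachModule H M)
    {S : X →L[ℂ] H} (hS : S ∈ B0l M) (hcpt : ∀ J ∈ M, IsCompactOperator (J.comp S)) :
    IsCompactOperator S :=
  isClosed_setOfPred_isCompactOperator.closure_subset_iff.2
    (Set.image_subset_iff.2 hcpt) (hM.mem_closure_image_comp_of_mem_B0l hS)

end IsBanachModule

theorem ContinuousLinearEquiv.symm_sub_symm {X Y : Type*} [NormedAddCommGroup X]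
    [NormedSpace ℂ X] [NormedAddCommGroup Y] [NormedSpace ℂ Y] (S T : X ≃L[ℂ] Y) :
    (S.symm : Y →L[ℂ] X) - (T.symm : Y →L[ℂ] X) =
      (S.symm : Y →L[ℂ] X) ∘L ((T : X →L[ℂ] Y) - (S : X →L[ℂ] Y)) ∘L (T.symm : Y →L[ℂ] X) := by
  ext y
  simp

theorem eq_comp_symm_comp_of_forall {X Y Z V : Type*} [NormedAddCommGroup X]
    [NormedSpace ℂ X] [NormedAddCommGroup Y] [NormedSpace ℂ Y] [NormedAddCommGroup Z]
    [NormedSpace ℂ Z] [NormedAddCommGroup V] [NormedSpace ℂ V] {S : X ≃L[ℂ] Y}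
    {e : X →L[ℂ] Z} {ι : V →L[ℂ] Y} {R : V →L[ℂ] Z} (h : ∀ v, ∃ u, e u = R v ∧ S u = ι v) :
    R = e ∘L (S.symm : Y →L[ℂ] X) ∘L ι := by
  ext v
  obtain ⟨u, hu, hSu⟩ := h v
  simp [← hu, ← hSu]

section GelfandTriple

variable {G E : Type*} [NormedAddCommGroup G] [NormedSpace ℂ G]
  [NormedAddCommGroup H] [InnerProductSpace ℂ H] [NormedAddCommGroup E] [NormedSpace ℂ E]
  [NormedAddCommGroup K] [InnerProductSpace ℂ K]

theorem adjointForm_precomp_sub_smul (D : G →L[ℂ] E) (a : E →L[ℂ] AntiDual E) (z : ℂ)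
    (e : G →L[ℂ] H) :
    adjointForm (precompAntiDual D ∘L a ∘L D - z • toAntiDual e ∘L e) =
      precompAntiDual D ∘L adjointForm a ∘L D - starRingEnd ℂ z • toAntiDual e ∘L e := by
  ext u y
  simp [inner_conj_symm]

theorem adjoint_eq_comp_symm_comp [CompleteSpace H] [CompleteSpace K] {e : G →L[ℂ] H}
    {F : G →L[ℂ] K} {S : G ≃L[ℂ] AntiDual G} {W : H →L[ℂ] K}
    (hW : ∀ v, ∃ u, adjointForm (S : G →L[ℂ] AntiDual G) u = toAntiDual e v ∧ W v = F u) :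
    adjoint W = e ∘L (S.symm : AntiDual G →L[ℂ] G) ∘L toAntiDual F := by
  refine ((eq_adjoint_iff _ _).2 fun k v => ?_).symm
  obtain ⟨u, hu, hWv⟩ := hW v
  calc inner ℂ (e (S.symm (toAntiDual F k))) v
      = adjointForm (S : G →L[ℂ] AntiDual G) u (S.symm (toAntiDual F k)) := by rw [hu]; rfl
    _ = inner ℂ k (W v) := by simp [hWv, inner_conj_symm]

end GelfandTriple

theorem stmt5_general {G H E K : Type*}
    [NormedAddCommGroup G] [InnerProductSpace ℂ G] [CompleteSpace G]
    [NormedAddCommGroup H] [InnerProductSpace ℂ H] [CompleteSpace H]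
    [NormedAddCommGroup E] [InnerProductSpace ℂ E]
    [NormedAddCommGroup K] [InnerProductSpace ℂ K] [CompleteSpace K]
    -- `(G, H)` is a compact Friedrichs module:
    (MH : Set (H →L[ℂ] H)) (hMH : IsHilbertModule H MH)
    (e : G →L[ℂ] H)
    (hcpt : ∀ A ∈ MH, IsCompactOperator (⇑(A.comp e)))
    -- `(E, K)` is a Friedrichs module:
    (MK : Set (K →L[ℂ] K)) (hMK : IsHilbertModule K MK)
    (eE : E →L[ℂ] K)
    -- the data `D`, `a`, `b`, `z`:
    (D : G →L[ℂ] E) (a b : E →L[ℂ] AntiDual E) (z : ℂ)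
    -- (1) `D*aD − z` and `D*bD − z` are bijective maps `G → G*`:
    (hbija : Function.Bijective
      ⇑((precompAntiDual D).comp (a.comp D) - z • (toAntiDual e).comp e))
    (hbijb : Function.Bijective
      ⇑((precompAntiDual D).comp (b.comp D) - z • (toAntiDual e).comp e))
    -- (2) `a − b ∈ B₀₀ˡ(E, E*)`:
    (hab : a - b ∈ closure
      ((fun T : K →L[ℂ] K => (toAntiDual eE).comp (T.comp eE)) '' (B0l (H := K) MK)))
    -- the resolvents `(Δ_a − z)⁻¹` and `(Δ_b − z)⁻¹`:
    (Ra Rb : H →L[ℂ] H)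
    (hRa : ∀ v : H, ∃ u : G, e u = Ra v ∧
      ((precompAntiDual D).comp (a.comp D)) u - z • ((toAntiDual e).comp e) u
        = toAntiDual e v)
    (hRb : ∀ v : H, ∃ u : G, e u = Rb v ∧
      ((precompAntiDual D).comp (b.comp D)) u - z • ((toAntiDual e).comp e) u
        = toAntiDual e v)
    -- (3) `D (Δ_{a*} − z̄)⁻¹ : H → K` is right decay preserving:
    (W : H →L[ℂ] K)
    (hW : ∀ v : H, ∃ u : G,
      ((precompAntiDual D).comp ((adjointForm a).comp D)) u
          - (starRingEnd ℂ z) • ((toAntiDual e).comp e) u = toAntiDual e v ∧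
      W v = eE (D u))
    (hWdp : RightDecayPreserving MH MK W) :
    IsCompactOperator (⇑(Ra - Rb)) := by
  set Sa := ContinuousLinearEquiv.ofBijective _ (LinearMap.ker_eq_bot.2 hbija.1)
    (LinearMap.range_eq_top.2 hbija.2)
  set Sb := ContinuousLinearEquiv.ofBijective _ (LinearMap.ker_eq_bot.2 hbijb.1)
    (LinearMap.range_eq_top.2 hbijb.2)
  have hRa' : Ra = e ∘L (Sa.symm : AntiDual G →L[ℂ] G) ∘L toAntiDual e :=
    eq_comp_symm_comp_of_forall hRa
  have hRb' : Rb = e ∘L (Sb.symm : AntiDual G →L[ℂ] G) ∘L toAntiDual e :=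
    eq_comp_symm_comp_of_forall hRb
  have hW' : adjoint W = e ∘L (Sa.symm : AntiDual G →L[ℂ] G) ∘L toAntiDual (eE ∘L D) :=
    adjoint_eq_comp_symm_comp fun v => by
      obtain ⟨u, hu, hWv⟩ := hW v
      refine ⟨u, ?_, hWv⟩
      rw [ContinuousLinearEquiv.coe_ofBijective, adjointForm_precomp_sub_smul]
      exact hu
  have hSba : (Sb : G →L[ℂ] AntiDual G) - Sa = precompAntiDual D ∘L (b - a) ∘L D := by
    rw [ContinuousLinearEquiv.coe_ofBijective, ContinuousLinearEquiv.coe_ofBijective,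
      sub_sub_sub_cancel_right, ← comp_sub, ← sub_comp]
  set Φ := compLeftRight (e ∘L (Sa.symm : AntiDual G →L[ℂ] G) ∘L precompAntiDual D)
    (D ∘L (Sb.symm : AntiDual G →L[ℂ] G) ∘L toAntiDual e)
  have hres : Ra - Rb = -Φ (a - b) := by
    rw [← map_neg, neg_sub, hRa', hRb', ← comp_sub, ← sub_comp,
      ContinuousLinearEquiv.symm_sub_symm, hSba]
    rfl
  have hΦ : Φ (a - b) ∈ B0l MH := by
    have hdecay := hWdp.leftDecayPreserving_adjoint hMH.star_mem hMK.star_mem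
    refine (isClosed_closure : IsClosed (B0l (H := H) MH)).closure_subset
      (map_mem_closure Φ.continuous hab ?_)
    rintro _ ⟨T, hT, rfl⟩
    have hΦT : Φ (toAntiDual eE ∘L T ∘L eE) = compLeftRight (adjoint W)
        (eE ∘L D ∘L (Sb.symm : AntiDual G →L[ℂ] G) ∘L toAntiDual e) T := by
      rw [hW']
      rfl
    exact hΦT ▸ hdecay.compLeftRight_mem_B0l hT _
  rw [hres]
  refine (hMH.isCompactOperator_of_mem_B0l hΦ fun J hJ => ?_).neg
  simp only [Φ, compLeftRight_apply, comp_assoc]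
  rw [← comp_assoc J e, coe_comp]
  exact (hcpt J hJ).comp_clm _

/-- Compactness criterion for operators in divergence form in a compact
Friedrichs module. -/
theorem stmt5 {G H E K : Type*}
    [NormedAddCommGroup G] [InnerProductSpace ℂ G] [CompleteSpace G]
    [NormedAddCommGroup H] [InnerProductSpace ℂ H] [CompleteSpace H]
    [NormedAddCommGroup E] [InnerProductSpace ℂ E] [CompleteSpace E]
    [NormedAddCommGroup K] [InnerProductSpace ℂ K] [CompleteSpace K]
    -- `(G, H)` is a compact Friedrichs module:
    (MH : Set (H →L[ℂ] H)) (hMH : IsHilbertModule H MH)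
    (e : G →L[ℂ] H) (he : Function.Injective ⇑e) (hd : DenseRange ⇑e)
    (hcpt : ∀ A ∈ MH, IsCompactOperator (⇑(A.comp e)))
    -- `(E, K)` is a Friedrichs module:
    (MK : Set (K →L[ℂ] K)) (hMK : IsHilbertModule K MK)
    (eE : E →L[ℂ] K) (heE : Function.Injective ⇑eE) (hdE : DenseRange ⇑eE)
    -- the data `D`, `a`, `b`, `z`:
    (D : G →L[ℂ] E) (a b : E →L[ℂ] AntiDual E) (z : ℂ)
    -- (1) `D*aD − z` and `D*bD − z` are bijective maps `G → G*`:
    (hbija : Function.Bijective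
      ⇑((precompAntiDual D).comp (a.comp D) - z • (toAntiDual e).comp e))
    (hbijb : Function.Bijective
      ⇑((precompAntiDual D).comp (b.comp D) - z • (toAntiDual e).comp e))
    -- (2) `a − b ∈ B₀₀ˡ(E, E*)`:
    (hab : a - b ∈ closure
      ((fun T : K →L[ℂ] K => (toAntiDual eE).comp (T.comp eE)) '' (B0l (H := K) MK)))
    -- the resolvents `(Δ_a − z)⁻¹` and `(Δ_b − z)⁻¹`:
    (Ra Rb : H →L[ℂ] H)
    (hRa : ∀ v : H, ∃ u : G, e u = Ra v ∧
      ((precompAntiDual D).comp (a.comp D)) u - z • ((toAntiDual e).comp e) u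
        = toAntiDual e v)
    (hRb : ∀ v : H, ∃ u : G, e u = Rb v ∧
      ((precompAntiDual D).comp (b.comp D)) u - z • ((toAntiDual e).comp e) u
        = toAntiDual e v)
    -- (3) `D (Δ_{a*} − z̄)⁻¹ : H → K` is right decay preserving:
    (W : H →L[ℂ] K)
    (hW : ∀ v : H, ∃ u : G,
      ((precompAntiDual D).comp ((adjointForm a).comp D)) u
          - (starRingEnd ℂ z) • ((toAntiDual e).comp e) u = toAntiDual e v ∧
      W v = eE (D u))
    (hWdp : RightDecayPreserving MH MK W) :
    IsCompactOperator (⇑(Ra - Rb)) :=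
  stmt5_general MH hMH e hcpt MK hMK eE D a b z hbija hbijb hab Ra Rb hRa hRb W hW hWdp

end
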